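/- arXiv:2202.12647 — 2 statements merged into one kernel-verified Lean document; each statement's English description precedes it below -/
import Mathlib

section
/- Let X and Y be finite-dimensional Banach spaces over F, and let T, A be nonzero linear operators from X to Y. Then T ⊥_B A if and only if 0 lies in the convex hull of the set { y*(A x) : x ∈ S_X, ‖T x‖ = ‖T‖, y* ∈ S_{Y*}, y*(T x) = ‖T‖ }. -/
/-!
If `0` is a convex combination of values `y (A x)` at norming pairs `(x, y)` of `T`, then for every
such pair `‖T + λ A‖ ≥ re y ((T + λ A) x) = ‖T‖ + re (λ y (A x))`, and averaging gives
`‖T + λ A‖ ≥ ‖T‖`.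

Conversely, in finite dimension the norming pairs form a compact set, so their values `y (A x)`
form a compact subset of `𝕜` whose convex hull is compact. If `0` is not in this hull, some
functional `z ↦ re (b z)` is negative on it. But norming pairs of `T + (t b) A` satisfy
`re (b y (A x)) ≥ 0` as soon as `‖T + (t b) A‖ ≥ ‖T‖`, and as `t ↓ 0` they accumulate at a
norming pair of `T` with the same property.
-/

open RCLike Set

theorem isCompact_convexHull {E : Type*} [NormedAddCommGroup E] [NormedSpace ℝ E]
    [FiniteDimensional ℝ E] {s : Set E} (hs : IsCompact s) : IsCompact (convexHull ℝ s) := by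
  have hcarath : convexHull ℝ s = ⋃ k ∈ Iic (Module.finrank ℝ E + 1),
      (fun p : (Fin k → ℝ) × (Fin k → E) => ∑ i, p.1 i • p.2 i) ''
        (stdSimplex ℝ (Fin k) ×ˢ univ.pi fun _ => s) := by
    apply Subset.antisymm
    · intro x hx
      obtain ⟨ι, _, z, w, hzs, hind, hw0, hw1, rfl⟩ := eq_pos_convex_span_of_mem_convexHull hx
      let e := Fintype.equivFin ι
      refine mem_biUnion (x := Fintype.card ι)
        (hind.card_le_finrank_succ.trans (by gcongr; exact Submodule.finrank_le _))
        ⟨(w ∘ e.symm, z ∘ e.symm),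
          ⟨⟨fun i => (hw0 _).le, ?_⟩, fun i _ => hzs (mem_range_self _)⟩, ?_⟩
      · simpa only [Function.comp, e.symm.sum_comp] using hw1
      · simp only [Function.comp, e.symm.sum_comp (fun i => w i • z i)]
    · simp only [iUnion_subset_iff]
      rintro k - - ⟨⟨w, z⟩, ⟨hw, hz⟩, rfl⟩
      exact (convex_convexHull ℝ s).sum_mem (fun i _ => hw.1 i) hw.2
        fun i _ => subset_convexHull ℝ s (hz i (mem_univ i))
  rw [hcarath]
  exact (finite_Iic _).isCompact_biUnion fun k _ =>
    ((isCompact_stdSimplex ℝ (Fin k)).prod (isCompact_univ_pi fun _ => hs)).image (by fun_prop)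

section

variable {𝕜 : Type*} [RCLike 𝕜]

theorem zero_mem_convexHull_of_forall_exists_re_mul_nonneg {s : Set 𝕜} (hs : IsCompact s)
    (h : ∀ b : 𝕜, ∃ z ∈ s, 0 ≤ re (b * z)) : (0 : 𝕜) ∈ convexHull ℝ s := by
  by_contra h0
  obtain ⟨f, u, hf, hu⟩ := geometric_hahn_banach_closed_point (𝕜 := 𝕜)
    (convex_convexHull ℝ s) (isCompact_convexHull hs).isClosed h0
  obtain ⟨z, hz, hfz⟩ := h (f 1)
  have hf_mul : f z = f 1 * z := by simpa [mul_comm] using f.map_smul z 1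
  have := hf z (subset_convexHull ℝ s hz)
  rw [hf_mul] at this
  rw [map_zero, map_zero] at hu
  linarith

variable {X Y : Type*} [NormedAddCommGroup X] [NormedSpace 𝕜 X]
  [NormedAddCommGroup Y] [NormedSpace 𝕜 Y]

namespace ContinuousLinearMap

theorem exists_norm_eq_one_norm_apply_eq_opNorm [FiniteDimensional 𝕜 X] [Nontrivial X]
    (T : X →L[𝕜] Y) : ∃ x, ‖x‖ = 1 ∧ ‖T x‖ = ‖T‖ := by
  have := FiniteDimensional.proper_rclike 𝕜 X
  obtain ⟨x, hx, hmax⟩ := (isCompact_sphere (0 : X) 1).exists_isMaxOn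
    (nonempty_coe_sort.1 (NormedSpace.sphere_nonempty_rclike 𝕜 zero_le_one))
    T.continuous.norm.continuousOn
  have hx1 : ‖x‖ = 1 := mem_sphere_zero_iff_norm.1 hx
  exact ⟨x, hx1, le_antisymm (T.unit_le_opNorm x hx1.le)
    (opNorm_le_of_unit_norm (norm_nonneg _) fun z hz => hmax (mem_sphere_zero_iff_norm.2 hz))⟩

theorem norm_apply_apply_le (T : X →L[𝕜] Y) {x : X} {y : Y →L[𝕜] 𝕜} (hx : ‖x‖ ≤ 1)
    (hy : ‖y‖ ≤ 1) : ‖y (T x)‖ ≤ ‖T‖ :=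
  calc ‖y (T x)‖ ≤ ‖y‖ * ‖T x‖ := y.le_opNorm _
    _ ≤ 1 * ‖T‖ := by gcongr; exact T.unit_le_opNorm x hx
    _ = ‖T‖ := one_mul _

theorem re_apply_add_smul_apply (T A : X →L[𝕜] Y) (c : 𝕜) (x : X) (y : Y →L[𝕜] 𝕜) :
    re (y ((T + c • A) x)) = re (y (T x)) + re (c * y (A x)) := by
  simp

def normingPairs (T : X →L[𝕜] Y) : Set (X × (Y →L[𝕜] 𝕜)) :=
  {p | ‖p.1‖ = 1 ∧ ‖T p.1‖ = ‖T‖ ∧ ‖p.2‖ = 1 ∧ p.2 (T p.1) = ‖T‖}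

theorem re_apply_eq_opNorm_of_mem_normingPairs {T : X →L[𝕜] Y} {p : X × (Y →L[𝕜] 𝕜)}
    (hp : p ∈ T.normingPairs) : re (p.2 (T p.1)) = ‖T‖ := by
  rw [hp.2.2.2, ofReal_re]

theorem mem_normingPairs_of_le_re {T : X →L[𝕜] Y} {x : X} {y : Y →L[𝕜] 𝕜} (hx : ‖x‖ = 1)
    (hy : ‖y‖ = 1) (h : ‖T‖ ≤ re (y (T x))) : (x, y) ∈ T.normingPairs := by
  have hle : ‖y (T x)‖ ≤ ‖T‖ := T.norm_apply_apply_le hx.le hy.le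
  refine ⟨hx, le_antisymm (T.unit_le_opNorm x hx.le) ?_, hy, ?_⟩
  · calc ‖T‖ ≤ ‖y (T x)‖ := h.trans (re_le_norm _)
      _ ≤ ‖y‖ * ‖T x‖ := y.le_opNorm _
      _ = ‖T x‖ := by rw [hy, one_mul]
  · rw [← re_eq_self_of_le (hle.trans h), le_antisymm ((re_le_norm _).trans hle) h]

theorem normingPairs_nonempty [FiniteDimensional 𝕜 X] {T : X →L[𝕜] Y} (hT : T ≠ 0) :
    T.normingPairs.Nonempty := by
  obtain ⟨x₀, hx₀⟩ := DFunLike.ne_iff.1 hT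
  have : Nontrivial X := nontrivial_of_ne x₀ 0 fun h => hx₀ (by simp [h])
  obtain ⟨x, hx, hTx⟩ := T.exists_norm_eq_one_norm_apply_eq_opNorm
  obtain ⟨y, hy, hyx⟩ := exists_dual_vector 𝕜 (T x) (by rw [hTx]; exact norm_ne_zero_iff.2 hT)
  exact ⟨(x, y), hx, hTx, hy, by rw [hyx, hTx]⟩

theorem isClosed_normingPairs (T : X →L[𝕜] Y) : IsClosed T.normingPairs := by
  simp only [normingPairs, ofPred_and]
  refine (isClosed_eq ?_ ?_).inter ((isClosed_eq ?_ ?_).inter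
    ((isClosed_eq ?_ ?_).inter (isClosed_eq ?_ ?_))) <;> fun_prop

theorem isCompact_normingPairs [FiniteDimensional 𝕜 X] [FiniteDimensional 𝕜 Y]
    (T : X →L[𝕜] Y) : IsCompact T.normingPairs := by
  have := FiniteDimensional.proper_rclike 𝕜 X
  have := FiniteDimensional.proper_rclike 𝕜 (Y →L[𝕜] 𝕜)
  exact ((isCompact_sphere (0 : X) 1).prod (isCompact_sphere (0 : Y →L[𝕜] 𝕜) 1)).of_isClosed_subset
    T.isClosed_normingPairs fun _ hp =>
      ⟨mem_sphere_zero_iff_norm.2 hp.1, mem_sphere_zero_iff_norm.2 hp.2.2.1⟩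

theorem opNorm_le_opNorm_add_smul_of_zero_mem_convexHull {T A : X →L[𝕜] Y}
    (h : (0 : 𝕜) ∈ convexHull ℝ ((fun p => p.2 (A p.1)) '' T.normingPairs)) (c : 𝕜) :
    ‖T‖ ≤ ‖T + c • A‖ := by
  set H : Set 𝕜 := {z | re (c * z) ≤ ‖T + c • A‖ - ‖T‖}
  have hH : Convex ℝ H := convex_halfSpace_le
    ⟨fun z w => by simp [mul_add], fun r z => by rw [mul_smul_comm, smul_re, smul_eq_mul]⟩ _
  have hsub : (fun p => p.2 (A p.1)) '' T.normingPairs ⊆ H := by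
    rintro - ⟨p, hp, rfl⟩
    have := (re_le_norm _).trans ((T + c • A).norm_apply_apply_le hp.1.le hp.2.2.1.le)
    rw [re_apply_add_smul_apply, re_apply_eq_opNorm_of_mem_normingPairs hp] at this
    simp only [H, mem_ofPred_eq]
    linarith
  simpa [H] using convexHull_min hsub hH h

theorem exists_re_mul_nonneg_of_le_opNorm_add_smul [FiniteDimensional 𝕜 X] {T A : X →L[𝕜] Y}
    (hT : T ≠ 0) (b : 𝕜) {t : ℝ} (ht : 0 < t) (h : ‖T‖ ≤ ‖T + (t * b) • A‖) :
    ∃ p : X × (Y →L[𝕜] 𝕜), ‖p.1‖ = 1 ∧ ‖p.2‖ = 1 ∧ 0 ≤ re (b * p.2 (A p.1)) ∧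
      ‖T‖ ≤ re (p.2 (T p.1)) + t * re (b * p.2 (A p.1)) := by
  have hT' : T + (t * b) • A ≠ 0 := norm_pos_iff.1 ((norm_pos_iff.2 hT).trans_le h)
  obtain ⟨p, hp⟩ := normingPairs_nonempty hT'
  have hsplit : ‖T‖ ≤ re (p.2 (T p.1)) + t * re (b * p.2 (A p.1)) := by
    rwa [← re_apply_eq_opNorm_of_mem_normingPairs hp, re_apply_add_smul_apply, mul_assoc,
      re_ofReal_mul] at h
  have hTp : re (p.2 (T p.1)) ≤ ‖T‖ :=
    (re_le_norm _).trans (T.norm_apply_apply_le hp.1.le hp.2.2.1.le)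
  exact ⟨p, hp.1, hp.2.2.1, (mul_nonneg_iff_of_pos_left ht).1 (by linarith), hsplit⟩

theorem exists_mem_normingPairs_re_mul_nonneg [FiniteDimensional 𝕜 X] [FiniteDimensional 𝕜 Y]
    {T A : X →L[𝕜] Y} (hT : T ≠ 0) (h : ∀ c : 𝕜, ‖T‖ ≤ ‖T + c • A‖) (b : 𝕜) :
    ∃ p ∈ T.normingPairs, 0 ≤ re (b * p.2 (A p.1)) := by
  have := FiniteDimensional.proper_rclike 𝕜 X
  have := FiniteDimensional.proper_rclike 𝕜 (Y →L[𝕜] 𝕜)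
  -- `C n` contains the norming pairs of `T + (b / (n + 1)) • A`; a point common to all `C n`
  -- is a norming pair of `T`
  set C : ℕ → Set (X × (Y →L[𝕜] 𝕜)) := fun n => {p | ‖p.1‖ = 1 ∧ ‖p.2‖ = 1 ∧
    0 ≤ re (b * p.2 (A p.1)) ∧ ‖T‖ ≤ re (p.2 (T p.1)) + 1 / (n + 1) * re (b * p.2 (A p.1))}
  have hC_closed (n : ℕ) : IsClosed (C n) := by
    simp only [C, ofPred_and]
    refine (isClosed_eq ?_ ?_).inter ((isClosed_eq ?_ ?_).inter
      ((isClosed_le ?_ ?_).inter (isClosed_le ?_ ?_))) <;> fun_prop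
  have hC_compact : IsCompact (C 0) :=
    ((isCompact_sphere (0 : X) 1).prod (isCompact_sphere (0 : Y →L[𝕜] 𝕜) 1)).of_isClosed_subset
      (hC_closed 0) fun _ hp => ⟨mem_sphere_zero_iff_norm.2 hp.1, mem_sphere_zero_iff_norm.2 hp.2.1⟩
  have hC_anti (n : ℕ) : C (n + 1) ⊆ C n := by
    rintro p ⟨hx, hy, hb, hle⟩
    exact ⟨hx, hy, hb, hle.trans (by gcongr; omega)⟩
  have hC_nonempty (n : ℕ) : (C n).Nonempty :=
    exists_re_mul_nonneg_of_le_opNorm_add_smul hT b (by positivity) (h _)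
  obtain ⟨p, hp⟩ := IsCompact.nonempty_iInter_of_sequence_nonempty_isCompact_isClosed C hC_anti
    hC_nonempty hC_compact hC_closed
  rw [mem_iInter] at hp
  obtain ⟨hx, hy, hb, -⟩ := hp 0
  refine ⟨p, mem_normingPairs_of_le_re hx hy ?_, hb⟩
  have hlim := (tendsto_one_div_add_atTop_nhds_zero_nat.mul_const
    (re (b * p.2 (A p.1)))).const_add (re (p.2 (T p.1)))
  rw [zero_mul, add_zero] at hlim
  exact ge_of_tendsto' hlim fun n => (hp n).2.2.2

end ContinuousLinearMap

end

theorem stmt4_general {𝕜 X Y : Type*} [RCLike 𝕜] [NormedAddCommGroup X] [NormedSpace 𝕜 X]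
    [FiniteDimensional 𝕜 X] [NormedAddCommGroup Y] [NormedSpace 𝕜 Y]
    [FiniteDimensional 𝕜 Y] (T A : X →L[𝕜] Y) (hT : T ≠ 0) :
    (∀ lam : 𝕜, ‖T‖ ≤ ‖T + lam • A‖) ↔
      (0 : 𝕜) ∈ convexHull ℝ {lam : 𝕜 | ∃ (x : X) (y : Y →L[𝕜] 𝕜),
        ‖x‖ = 1 ∧ ‖T x‖ = ‖T‖ ∧ ‖y‖ = 1 ∧ y (T x) = (‖T‖ : 𝕜) ∧ lam = y (A x)} := by
  have hS : {lam : 𝕜 | ∃ (x : X) (y : Y →L[𝕜] 𝕜),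
      ‖x‖ = 1 ∧ ‖T x‖ = ‖T‖ ∧ ‖y‖ = 1 ∧ y (T x) = (‖T‖ : 𝕜) ∧ lam = y (A x)} =
      (fun p => p.2 (A p.1)) '' T.normingPairs := by
    ext lam
    simp only [ContinuousLinearMap.normingPairs, mem_image, Prod.exists, mem_ofPred_eq,
      and_assoc, eq_comm (b := lam)]
  rw [hS]
  refine ⟨fun h => zero_mem_convexHull_of_forall_exists_re_mul_nonneg
    (T.isCompact_normingPairs.image (by fun_prop)) fun b => ?_,
    ContinuousLinearMap.opNorm_le_opNorm_add_smul_of_zero_mem_convexHull⟩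
  obtain ⟨p, hp, hb⟩ := ContinuousLinearMap.exists_mem_normingPairs_re_mul_nonneg hT h b
  exact ⟨_, mem_image_of_mem _ hp, hb⟩

theorem stmt4 {𝕜 X Y : Type*} [RCLike 𝕜] [NormedAddCommGroup X] [NormedSpace 𝕜 X]
    [FiniteDimensional 𝕜 X] [NormedAddCommGroup Y] [NormedSpace 𝕜 Y]
    [FiniteDimensional 𝕜 Y] (T A : X →L[𝕜] Y) (hT : T ≠ 0) (hA : A ≠ 0) :
    (∀ lam : 𝕜, ‖T‖ ≤ ‖T + lam • A‖) ↔
      (0 : 𝕜) ∈ convexHull ℝ {lam : 𝕜 | ∃ (x : X) (y : Y →L[𝕜] 𝕜),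
        ‖x‖ = 1 ∧ ‖T x‖ = ‖T‖ ∧ ‖y‖ = 1 ∧ y (T x) = (‖T‖ : 𝕜) ∧ lam = y (A x)} :=
  stmt4_general T A hT
end

section
/- Let X_1, …, X_k, Y be finite-dimensional Banach spaces and T a nonzero bounded k-linear map. If T is smooth, then there exists x⃗₀ = (x_1,…,x_k) in the product of unit spheres such that M_T = { (μ^{(1)} x_1, …, μ^{(k)} x_k) : each μ^{(i)} is a unimodular scalar } and T x⃗₀ is a smooth point of Y. -/
/-!
A norming point `x₀` of `T` exists by compactness of the product of unit spheres. If another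
norming point `z` had some `z i` not parallel to `x₀ i`, a functional killing `z i` but not `x₀ i`
yields `B` with `B z = 0` and `B x₀ = T x₀`; then `T ⊥ B` and `T ⊥ T - B` (Birkhoff–James), so
right-additivity gives `T ⊥ T`, which is absurd. Hence the norming points are exactly the
unimodular rescalings of `x₀`, and on them `T` agrees with `A = Φ.smulRight (T x₀)`, where
`Φ (μ • x₀) = ∏ μ`.
Two distinct support functionals `g ≠ f` at `T x₀` split `T x₀ = w + (T x₀ - w)` with
`g w = 0 = f (T x₀ - w)`, so `T ⊥ Φ.smulRight w` and `T ⊥ Φ.smulRight (T x₀ - w)`, whence `T ⊥ A`.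
But since `T - A` vanishes on the norming points of `T`, compactness gives `‖T - t • A‖ < ‖T‖`
for small `t > 0`.
-/

open Set

section BirkhoffJames

variable (𝕜 : Type*) {E : Type*} [NormedField 𝕜] [NormedAddCommGroup E] [Module 𝕜 E]

def BirkhoffJamesOrthogonal (x y : E) : Prop :=
  ∀ c : 𝕜, ‖x‖ ≤ ‖x + c • y‖

def IsBirkhoffJamesRightAdditive (x : E) : Prop :=
  ∀ y₁ y₂ : E, BirkhoffJamesOrthogonal 𝕜 x y₁ → BirkhoffJamesOrthogonal 𝕜 x y₂ →
    BirkhoffJamesOrthogonal 𝕜 x (y₁ + y₂)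

variable {𝕜}

theorem BirkhoffJamesOrthogonal.eq_zero_of_self {x : E} (h : BirkhoffJamesOrthogonal 𝕜 x x) :
    x = 0 := by
  simpa using h (-1)

end BirkhoffJames

theorem SeparatingDual.exists_eq_one_eq_zero_of_notMem_span {R V : Type*} [Field R]
    [AddCommGroup V] [TopologicalSpace R] [TopologicalSpace V] [IsTopologicalRing R]
    [Module R V] [SeparatingDual R V] {a b : V} (h : a ∉ Submodule.span R {b}) :
    ∃ f : StrongDual R V, f a = 1 ∧ f b = 0 := by
  rcases eq_or_ne b 0 with rfl | hb
  · obtain ⟨f, hf⟩ := exists_eq_one (R := R) (x := a) (by rintro rfl; exact h (zero_mem _))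
    exact ⟨f, hf, map_zero f⟩
  obtain ⟨g, hg⟩ := exists_eq_one (R := R) hb
  -- If `f (a - g a • b) = 1`, then `f - f b • g` is `1` at `a` and `0` at `b`.
  have hv : a - g a • b ≠ 0 := fun hv ↦
    h (sub_eq_zero.mp hv ▸ Submodule.smul_mem _ _ (Submodule.mem_span_singleton_self b))
  obtain ⟨f, hf⟩ := exists_eq_one (R := R) hv
  refine ⟨f - f b • g, ?_, by simp [hg]⟩
  simpa [mul_comm] using hf

theorem exists_apply_eq_zero_apply_sub_eq_zero {K V F : Type*} [Field K] [AddCommGroup V]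
    [Module K V] [FunLike F V K] [LinearMapClass F K V K] {f g : F} {u v : V}
    (hu : f u = g u) (hv : f v ≠ g v) : ∃ w, f w = 0 ∧ g (u - w) = 0 := by
  have hd : f v - g v ≠ 0 := sub_ne_zero.mpr hv
  refine ⟨(f v - g v)⁻¹ • (f v • u - g u • v), ?_, ?_⟩
  · simp [hu, mul_comm]
  · simp only [map_sub, map_smul, smul_eq_mul]
    field_simp
    ring

theorem le_norm_of_le_norm_add_smul_sub {𝕜 E : Type*} [RCLike 𝕜] [NormedAddCommGroup E]
    [NormedSpace 𝕜 E] {a b : E} {r t : ℝ} (ht : 0 < t) (ht1 : t ≤ 1) (ha : ‖a‖ ≤ r)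
    (h : r ≤ ‖a + (t : 𝕜) • (b - a)‖) : r ≤ ‖b‖ := by
  have hconv : a + (t : 𝕜) • (b - a) = ((1 - t : ℝ) : 𝕜) • a + (t : 𝕜) • b := by
    simp only [RCLike.ofReal_sub, RCLike.ofReal_one]
    module
  rw [hconv] at h
  have := h.trans (norm_add_le _ _)
  rw [norm_smul, norm_smul, RCLike.norm_ofReal, RCLike.norm_ofReal, abs_of_pos ht,
    abs_of_nonneg (sub_nonneg.2 ht1)] at this
  nlinarith

namespace ContinuousMultilinearMap

variable {𝕜 ι : Type*} [RCLike 𝕜] {X : ι → Type*}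
  [∀ i, NormedAddCommGroup (X i)] [∀ i, NormedSpace 𝕜 (X i)]
  {Y : Type*} [NormedAddCommGroup Y] [NormedSpace 𝕜 Y]

theorem nontrivial_of_ne_zero {T : ContinuousMultilinearMap 𝕜 X Y} (hT : T ≠ 0) (i : ι) :
    Nontrivial (X i) := by
  by_contra h
  rw [not_nontrivial_iff_subsingleton] at h
  exact hT (ext fun m ↦ T.map_coord_zero i (Subsingleton.elim _ _))

theorem exists_apply_eq_zero_apply_eq [DecidableEq ι] (T : ContinuousMultilinearMap 𝕜 X Y)
    {x z : ∀ i, X i} {i : ι} {φ : StrongDual 𝕜 (X i)} (hx : φ (x i) = 1) (hz : φ (z i) = 0) :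
    ∃ B : ContinuousMultilinearMap 𝕜 X Y, B z = 0 ∧ B x = T x := by
  let B :=
    T.compContinuousLinearMap (Function.update (fun j ↦ .id 𝕜 (X j)) i (φ.smulRight (x i)))
  have hB : ∀ m, B m = T (Function.update m i (φ (m i) • x i)) := fun m ↦ by
    simp only [B, compContinuousLinearMap_apply]
    congr 1
    ext j
    rcases eq_or_ne j i with rfl | hj <;> simp [*]
  refine ⟨B, ?_, ?_⟩
  · rw [hB, hz, zero_smul]
    exact T.map_coord_zero i (Function.update_self ..)
  · rw [hB, hx, one_smul, Function.update_eq_self]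

variable [Fintype ι]

def normingSet (T : ContinuousMultilinearMap 𝕜 X Y) : Set (∀ i, X i) :=
  {x | (∀ i, ‖x i‖ = 1) ∧ ‖T x‖ = ‖T‖}

theorem norm_apply_le_of_forall_norm_eq_one (T : ContinuousMultilinearMap 𝕜 X Y)
    {x : ∀ i, X i} (hx : ∀ i, ‖x i‖ = 1) : ‖T x‖ ≤ ‖T‖ := by
  simpa [hx] using T.le_opNorm x

theorem opNorm_le_of_forall_norm_eq_one (T : ContinuousMultilinearMap 𝕜 X Y) {C : ℝ}
    (hC : 0 ≤ C) (h : ∀ x : ∀ i, X i, (∀ i, ‖x i‖ = 1) → ‖T x‖ ≤ C) : ‖T‖ ≤ C := by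
  refine T.opNorm_le_bound hC fun m ↦ ?_
  by_cases hm : ∃ i, m i = 0
  · obtain ⟨i, hi⟩ := hm
    rw [T.map_coord_zero i hi, norm_zero]
    positivity
  push Not at hm
  have hunit : ∀ i, ‖(‖m i‖⁻¹ : 𝕜) • m i‖ = 1 := fun i ↦ norm_smul_inv_norm (hm i)
  have hm' : m = fun i ↦ (‖m i‖ : 𝕜) • (‖m i‖⁻¹ : 𝕜) • m i := by
    ext i
    rw [smul_smul, mul_inv_cancel₀ (by simpa using hm i), one_smul]
  calc ‖T m‖ = (∏ i, ‖m i‖) * ‖T fun i ↦ (‖m i‖⁻¹ : 𝕜) • m i‖ := by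
        conv_lhs => rw [hm', T.map_smul_univ, norm_smul, norm_prod]
        simp only [RCLike.norm_ofReal, abs_norm]
    _ ≤ C * ∏ i, ‖m i‖ := by
        rw [mul_comm]
        gcongr
        exact h _ hunit

theorem normingSet_nonempty [∀ i, FiniteDimensional 𝕜 (X i)] [∀ i, Nontrivial (X i)]
    (T : ContinuousMultilinearMap 𝕜 X Y) : (normingSet T).Nonempty := by
  have : ∀ i, ProperSpace (X i) := fun i ↦ FiniteDimensional.proper 𝕜 (X i)
  let K : Set (∀ i, X i) := univ.pi fun i ↦ Metric.sphere 0 1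
  have hK : IsCompact K := isCompact_univ_pi fun i ↦ isCompact_sphere _ _
  have hKne : K.Nonempty :=
    univ_pi_nonempty_iff.2 fun i ↦
      nonempty_coe_sort.1 (NormedSpace.sphere_nonempty_rclike 𝕜 zero_le_one)
  have mem_K {x : ∀ i, X i} : x ∈ K ↔ ∀ i, ‖x i‖ = 1 := by simp [K]
  obtain ⟨x, hxK, hmax⟩ := hK.exists_isMaxOn hKne T.coe_continuous.norm.continuousOn
  refine ⟨x, mem_K.1 hxK, le_antisymm (T.norm_apply_le_of_forall_norm_eq_one (mem_K.1 hxK)) ?_⟩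
  exact T.opNorm_le_of_forall_norm_eq_one (norm_nonneg _) fun y hy ↦
    isMaxOn_iff.1 hmax y (mem_K.2 hy)

theorem smul_mem_normingSet {T : ContinuousMultilinearMap 𝕜 X Y} {x : ∀ i, X i}
    (hx : x ∈ normingSet T) {μ : ι → 𝕜} (hμ : ∀ i, ‖μ i‖ = 1) :
    (fun i ↦ μ i • x i) ∈ normingSet T :=
  ⟨fun i ↦ by rw [norm_smul, hμ i, hx.1 i, mul_one], by
    rw [T.map_smul_univ, norm_smul, norm_prod, hx.2]; simp [hμ]⟩

theorem birkhoffJamesOrthogonal_of_dual_apply_eq_zero {T A : ContinuousMultilinearMap 𝕜 X Y}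
    {x : ∀ i, X i} (hx : x ∈ normingSet T) {f : StrongDual 𝕜 Y} (hf : ‖f‖ ≤ 1)
    (hfT : ‖f (T x)‖ = ‖T‖) (hfA : f (A x) = 0) : BirkhoffJamesOrthogonal 𝕜 T A := fun c ↦
  calc ‖T‖ = ‖f ((T + c • A) x)‖ := by simp [hfA, hfT]
    _ ≤ ‖(T + c • A) x‖ := f.le_of_opNorm_le hf _ |>.trans_eq (one_mul _)
    _ ≤ ‖T + c • A‖ := norm_apply_le_of_forall_norm_eq_one _ hx.1

theorem birkhoffJamesOrthogonal_of_apply_eq_zero {T A : ContinuousMultilinearMap 𝕜 X Y}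
    {x : ∀ i, X i} (hx : x ∈ normingSet T) (hA : A x = 0) : BirkhoffJamesOrthogonal 𝕜 T A := by
  obtain ⟨f, hf, hfT⟩ := exists_dual_vector'' 𝕜 (T x)
  exact birkhoffJamesOrthogonal_of_dual_apply_eq_zero hx hf (by simp [hfT, hx.2]) (by simp [hA])

theorem mem_span_of_mem_normingSet
    {T : ContinuousMultilinearMap 𝕜 X Y} (hs : IsBirkhoffJamesRightAdditive 𝕜 T) (hT : T ≠ 0)
    {x z : ∀ i, X i} (hx : x ∈ normingSet T) (hz : z ∈ normingSet T) (i : ι) :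
    x i ∈ Submodule.span 𝕜 {z i} := by
  classical
  by_contra h
  obtain ⟨φ, hφx, hφz⟩ := SeparatingDual.exists_eq_one_eq_zero_of_notMem_span h
  obtain ⟨B, hBz, hBx⟩ := T.exists_apply_eq_zero_apply_eq hφx hφz
  -- `T` is orthogonal to `B` (seen at `z`) and to `T - B` (seen at `x`), hence to itself.
  have hTT := hs B (T - B) (birkhoffJamesOrthogonal_of_apply_eq_zero hz hBz)
    (birkhoffJamesOrthogonal_of_apply_eq_zero hx (by simp [hBx]))
  rw [add_sub_cancel] at hTT
  exact hT hTT.eq_zero_of_self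

theorem normingSet_eq_of_isBirkhoffJamesRightAdditive {T : ContinuousMultilinearMap 𝕜 X Y}
    (hs : IsBirkhoffJamesRightAdditive 𝕜 T) (hT : T ≠ 0) {x₀ : ∀ i, X i}
    (hx₀ : x₀ ∈ normingSet T) :
    normingSet T = {x | ∃ μ : ι → 𝕜, (∀ i, ‖μ i‖ = 1) ∧ x = fun i ↦ μ i • x₀ i} := by
  ext z
  refine ⟨fun hz ↦ ?_, fun ⟨μ, hμ, hz⟩ ↦ hz ▸ smul_mem_normingSet hx₀ hμ⟩
  have hμ : ∀ i, ∃ μ : 𝕜, μ • x₀ i = z i := fun i ↦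
    Submodule.mem_span_singleton.1 (mem_span_of_mem_normingSet hs hT hz hx₀ i)
  choose μ hμ using hμ
  refine ⟨μ, fun i ↦ ?_, funext fun i ↦ (hμ i).symm⟩
  simpa [norm_smul, hx₀.1 i, hz.1 i] using congr_arg norm (hμ i)

theorem exists_apply_smul_eq_prod {x₀ : ∀ i, X i} (hx₀ : ∀ i, x₀ i ≠ 0) :
    ∃ Φ : ContinuousMultilinearMap 𝕜 X 𝕜, ∀ μ : ι → 𝕜, Φ (fun i ↦ μ i • x₀ i) = ∏ i, μ i := by
  choose φ hφ using fun i ↦ SeparatingDual.exists_eq_one (R := 𝕜) (hx₀ i)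
  exact ⟨(ContinuousMultilinearMap.mkPiAlgebra 𝕜 ι 𝕜).compContinuousLinearMap φ,
    fun μ ↦ by simp [hφ]⟩

theorem not_birkhoffJamesOrthogonal_of_norm_sub_apply_lt [∀ i, FiniteDimensional 𝕜 (X i)]
    [∀ i, Nontrivial (X i)] {T A : ContinuousMultilinearMap 𝕜 X Y}
    (h : ∀ z ∈ normingSet T, ‖(T - A) z‖ < ‖T‖) : ¬ BirkhoffJamesOrthogonal 𝕜 T A := by
  intro hTA
  have : ∀ i, ProperSpace (X i) := fun i ↦ FiniteDimensional.proper 𝕜 (X i)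
  -- On the compact set `K` where `T - A` reaches `‖T‖`, `‖T ·‖` stays below `‖T‖ - δ` ...
  let K : Set (∀ i, X i) := {x | (∀ i, ‖x i‖ = 1) ∧ ‖T‖ ≤ ‖(T - A) x‖}
  have hK : IsCompact K := by
    refine (isCompact_univ_pi fun i ↦ isCompact_sphere (0 : X i) 1).of_isClosed_subset ?_
      fun x hx i _ ↦ by simpa using hx.1 i
    simp only [K, ofPred_and, ofPred_forall]
    exact (isClosed_iInter fun i ↦ isClosed_eq (continuous_apply i).norm continuous_const).inter
      (isClosed_le continuous_const (T - A).coe_continuous.norm)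
  have hlt : ∀ x ∈ K, 0 < ‖T‖ - ‖T x‖ := fun x hx ↦ sub_pos.2 <|
    (T.norm_apply_le_of_forall_norm_eq_one hx.1).lt_of_ne fun hTx ↦
      (h x ⟨hx.1, hTx⟩).not_ge hx.2
  obtain ⟨δ, hδ, hδK⟩ := hK.exists_forall_le'
    (continuous_const.sub T.coe_continuous.norm).continuousOn hlt
  -- ... yet by convexity of the norm, a norming point of `T - t • A` lies in `K`, and for
  -- `t * ‖A‖ < δ` it nearly norms `T`.
  set t : ℝ := δ / (‖A‖ + δ)
  have ht : 0 < t := by positivity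
  have ht1 : t ≤ 1 := div_le_one_of_le₀ (by linarith [norm_nonneg A]) (by positivity)
  have htA : t * ‖A‖ < δ := by
    rw [div_mul_eq_mul_div, div_lt_iff₀ (by positivity)]
    nlinarith [norm_nonneg A]
  obtain ⟨x, hx, hxT⟩ := normingSet_nonempty (T - (t : 𝕜) • A)
  have hTx : ‖T‖ ≤ ‖T x - (t : 𝕜) • A x‖ := by
    have := hTA (-t)
    rwa [neg_smul, ← sub_eq_add_neg, ← hxT, sub_apply, smul_apply] at this
  have hxK : x ∈ K := ⟨hx, le_norm_of_le_norm_add_smul_sub (𝕜 := 𝕜) ht ht1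
    (T.norm_apply_le_of_forall_norm_eq_one hx)
    (by rwa [sub_apply, sub_sub_cancel_left, smul_neg, ← sub_eq_add_neg])⟩
  have hTx' : ‖T‖ ≤ ‖T x‖ + t * ‖A‖ :=
    calc ‖T‖ ≤ ‖T x‖ + ‖(t : 𝕜) • A x‖ := hTx.trans (norm_sub_le _ _)
      _ ≤ ‖T x‖ + t * ‖A‖ := by
        rw [norm_smul, RCLike.norm_ofReal, abs_of_pos ht]
        gcongr
        exact A.norm_apply_le_of_forall_norm_eq_one hx
  linarith [show δ ≤ ‖T‖ - ‖T x‖ from hδK x hxK]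

end ContinuousMultilinearMap

open ContinuousMultilinearMap in
theorem stmt16_general {𝕜 : Type*} [RCLike 𝕜] {k : ℕ} {X : Fin k → Type*}
    [∀ i, NormedAddCommGroup (X i)] [∀ i, NormedSpace 𝕜 (X i)]
    [∀ i, FiniteDimensional 𝕜 (X i)]
    {Y : Type*} [NormedAddCommGroup Y] [NormedSpace 𝕜 Y]
    (T : ContinuousMultilinearMap 𝕜 X Y) (hT : T ≠ 0)
    (hsmooth : ∀ A₁ A₂ : ContinuousMultilinearMap 𝕜 X Y,
      (∀ lam : 𝕜, ‖T‖ ≤ ‖T + lam • A₁‖) → (∀ lam : 𝕜, ‖T‖ ≤ ‖T + lam • A₂‖) →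
      (∀ lam : 𝕜, ‖T‖ ≤ ‖T + lam • (A₁ + A₂)‖)) :
    ∃ x₀ : ∀ i, X i, (∀ i, ‖x₀ i‖ = 1) ∧
      {x : ∀ i, X i | (∀ i, ‖x i‖ = 1) ∧ ‖T x‖ = ‖T‖}
        = {x : ∀ i, X i | ∃ μ : Fin k → 𝕜, (∀ i, ‖μ i‖ = 1) ∧ x = fun i => μ i • x₀ i} ∧
      (∃! y : Y →L[𝕜] 𝕜, ‖y‖ = 1 ∧ y (T x₀) = (‖T x₀‖ : 𝕜)) := by
  have := nontrivial_of_ne_zero hT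
  obtain ⟨x₀, hx₀⟩ := normingSet_nonempty T
  have hM := normingSet_eq_of_isBirkhoffJamesRightAdditive hsmooth hT hx₀
  refine ⟨x₀, hx₀.1, hM, ?_⟩
  have hu : T x₀ ≠ 0 := norm_ne_zero_iff.1 (hx₀.2.trans_ne (norm_ne_zero_iff.2 hT))
  obtain ⟨f, hf, hfu⟩ := exists_dual_vector 𝕜 (T x₀) (norm_ne_zero_iff.2 hu)
  refine ⟨f, ⟨hf, hfu⟩, ?_⟩
  rintro g ⟨hg, hgu⟩
  by_contra hgf
  obtain ⟨v, hv⟩ := DFunLike.ne_iff.1 hgf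
  obtain ⟨w, hgw, hfw⟩ := exists_apply_eq_zero_apply_sub_eq_zero (hgu.trans hfu.symm) hv
  obtain ⟨Φ, hΦ⟩ := exists_apply_smul_eq_prod (𝕜 := 𝕜) fun i ↦ norm_ne_zero_iff.1
    ((hx₀.1 i).trans_ne one_ne_zero)
  let A := smulRightL 𝕜 X Y Φ
  have hg₁ : BirkhoffJamesOrthogonal 𝕜 T (A w) :=
    birkhoffJamesOrthogonal_of_dual_apply_eq_zero hx₀ hg.le (by simp [hgu, hx₀.2])
      (by simp [A, hgw])
  have hf₂ : BirkhoffJamesOrthogonal 𝕜 T (A (T x₀ - w)) :=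
    birkhoffJamesOrthogonal_of_dual_apply_eq_zero hx₀ hf.le (by simp [hfu, hx₀.2])
      (by simp [A, hfw])
  refine not_birkhoffJamesOrthogonal_of_norm_sub_apply_lt (T := T) (A := A (T x₀))
    (fun z hz ↦ ?_) ?_
  · obtain ⟨μ, -, rfl⟩ := hM ▸ hz
    simpa [A, hΦ, T.map_smul_univ] using norm_pos_iff.2 hT
  · have hsum := hsmooth _ _ hg₁ hf₂
    rwa [← map_add, add_sub_cancel] at hsum

theorem stmt16 {𝕜 : Type*} [RCLike 𝕜] {k : ℕ} {X : Fin k → Type*}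
    [∀ i, NormedAddCommGroup (X i)] [∀ i, NormedSpace 𝕜 (X i)]
    [∀ i, FiniteDimensional 𝕜 (X i)]
    {Y : Type*} [NormedAddCommGroup Y] [NormedSpace 𝕜 Y] [FiniteDimensional 𝕜 Y]
    (T : ContinuousMultilinearMap 𝕜 X Y) (hT : T ≠ 0)
    (hsmooth : ∀ A₁ A₂ : ContinuousMultilinearMap 𝕜 X Y,
      (∀ lam : 𝕜, ‖T‖ ≤ ‖T + lam • A₁‖) → (∀ lam : 𝕜, ‖T‖ ≤ ‖T + lam • A₂‖) →
      (∀ lam : 𝕜, ‖T‖ ≤ ‖T + lam • (A₁ + A₂)‖)) :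
    ∃ x₀ : ∀ i, X i, (∀ i, ‖x₀ i‖ = 1) ∧
      {x : ∀ i, X i | (∀ i, ‖x i‖ = 1) ∧ ‖T x‖ = ‖T‖}
        = {x : ∀ i, X i | ∃ μ : Fin k → 𝕜, (∀ i, ‖μ i‖ = 1) ∧ x = fun i => μ i • x₀ i} ∧
      (∃! y : Y →L[𝕜] 𝕜, ‖y‖ = 1 ∧ y (T x₀) = (‖T x₀‖ : 𝕜)) :=
  stmt16_general T hT hsmooth
end
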